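/- Let a_k, c_k be defined by a_1 = 4, c_1 = 6, a_k = a_{k-1} + 2c_{k-1}, c_k = a_{k-1} + 4c_{k-1}. Then for all s ≥ 1, ∑_{k=1}^{s} c_k = -2 + (1 - 3/√17)·((5-√17)/2)^s + (1 + 3/√17)·((5+√17)/2)^s. -/
import Mathlib


open Real

/-- With `a_1 = 4`, `c_1 = 6`, `a_k = a_{k-1} + 2c_{k-1}`, `c_k = a_{k-1} + 4c_{k-1}`:
for all `s ≥ 1`,
`∑_{k=1}^{s} c_k = -2 + (1 - 3/√17)((5-√17)/2)^s + (1 + 3/√17)((5+√17)/2)^s`. -/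
theorem urv_tree_edge_sum (a c : ℕ → ℝ)
    (ha1 : a 1 = 4) (hc1 : c 1 = 6)
    (ha : ∀ k, 1 ≤ k → a (k + 1) = a k + 2 * c k)
    (hc : ∀ k, 1 ≤ k → c (k + 1) = a k + 4 * c k) :
    ∀ s : ℕ, 1 ≤ s →
      ∑ k ∈ Finset.Icc 1 s, c k =
        -2 + (1 - 3 / Real.sqrt 17) * ((5 - Real.sqrt 17) / 2) ^ s +
          (1 + 3 / Real.sqrt 17) * ((5 + Real.sqrt 17) / 2) ^ s := by
  set r := Real.sqrt 17 with hr
  have hrpos : 0 < r := Real.sqrt_pos.mpr (by norm_num)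
  have hr2 : r ^ 2 = 17 := Real.sq_sqrt (by norm_num)
  have hrne : r ≠ 0 := ne_of_gt hrpos
  set p := (5 + r) / 2 with hp
  set q := (5 - r) / 2 with hq
  have key : ∀ n : ℕ,
      a (n + 1) = 2 * ((1 + 3 / r) * p ^ n + (1 - 3 / r) * q ^ n) ∧
      c (n + 1) = (1 + 3 / r) * (p - 1) * p ^ n + (1 - 3 / r) * (q - 1) * q ^ n ∧
      ∑ k ∈ Finset.Icc 1 (n + 1), c k =
        -2 + (1 - 3 / r) * q ^ (n + 1) + (1 + 3 / r) * p ^ (n + 1) := by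
    intro n
    induction n with
    | zero =>
      refine ⟨?_, ?_, ?_⟩
      · simp only [pow_zero, mul_one]
        rw [show (0:ℕ)+1 = 1 from rfl, ha1]
        field_simp
        ring
      · simp only [pow_zero, mul_one]
        rw [show (0:ℕ)+1 = 1 from rfl, hc1, hp, hq]
        field_simp
        nlinarith [hr2]
      · rw [show Finset.Icc 1 1 = {1} by rfl, Finset.sum_singleton, hc1]
        simp only [pow_one, hp, hq]
        field_simp
        nlinarith [hr2]
    | succ n ih =>
      obtain ⟨iha, ihc, ihs⟩ := ih
      have hpq : p * q = 2 := by
        simp only [hp, hq]; nlinarith [hr2]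
      have ha' := ha (n + 1) (by omega)
      have hc' := hc (n + 1) (by omega)
      have hca : c (n + 2) = (1 + 3 / r) * (p - 1) * p ^ (n + 1) +
          (1 - 3 / r) * (q - 1) * q ^ (n + 1) := by
        rw [hc', iha, ihc]
        have hpeq : (p - 1) * p = 2 + 4 * (p - 1) := by
          simp only [hp]; nlinarith [hr2]
        have hqeq : (q - 1) * q = 2 + 4 * (q - 1) := by
          simp only [hq]; nlinarith [hr2]
        have hrw : (1 + 3 / r) * (p - 1) * p ^ (n + 1) +
            (1 - 3 / r) * (q - 1) * q ^ (n + 1) =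
            (1 + 3 / r) * ((p - 1) * p) * p ^ n +
            (1 - 3 / r) * ((q - 1) * q) * q ^ n := by ring
        rw [hrw, hpeq, hqeq]
        ring
      refine ⟨?_, hca, ?_⟩
      · rw [ha', iha, ihc]; ring
      · rw [Finset.sum_Icc_succ_top (by omega : 1 ≤ n + 1 + 1), ihs, hca]; ring
  intro s hs
  obtain ⟨n, rfl⟩ := Nat.exists_eq_add_of_le hs
  simpa [add_comm] using (key n).2.2
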